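/- arXiv:1102.2510 — 5 statements merged into one kernel-verified Lean document; each statement's English description precedes it below -/
import Mathlib

section
/- All zeros z of P(z) = z^n + a_1 z^{n-1} + ... + a_n satisfy |z| ≤ (|a_1| + 1 + sqrt((|a_1| - 1)^2 + 4 A_2))/2, where A_2 = max_{2 ≤ j ≤ n} |a_j| (Joyal–Labelle–Rahman bound). -/
/-!
A root `z` with `r = ‖z‖ > 1` satisfies `r ^ n ≤ ‖a₁‖ r ^ (n-1) + A₂ (r ^ (n-2) + ⋯ + 1)`.
Multiplying by `r - 1` telescopes the geometric sum, and dividing by `r ^ (n-1)` leaves the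
quadratic inequality `(r - 1)(r - ‖a₁‖) ≤ A₂`, whose solutions lie below the larger root
`(‖a₁‖ + 1 + √((‖a₁‖ - 1)² + 4 A₂)) / 2`.
-/

open Finset

theorem le_of_sub_one_mul_sub_le {r c A : ℝ} (h : (r - 1) * (r - c) ≤ A) :
    r ≤ (c + 1 + √((c - 1) ^ 2 + 4 * A)) / 2 := by
  have hsq : (2 * r - c - 1) ^ 2 ≤ (c - 1) ^ 2 + 4 * A := by nlinarith
  linarith [le_abs_self (2 * r - c - 1), Real.abs_le_sqrt hsq]

theorem sub_one_mul_sub_le_of_pow_le {r c A : ℝ} {m : ℕ} (hr : 1 < r) (hA : 0 ≤ A)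
    (h : r ^ (m + 1) ≤ c * r ^ m + A * ∑ i ∈ range m, r ^ i) :
    (r - 1) * (r - c) ≤ A := by
  have hrm : 0 < r ^ m := by positivity
  have htele : r ^ m * ((r - 1) * (r - c)) ≤ A * (r ^ m - 1) := by
    have := mul_le_mul_of_nonneg_right h (sub_nonneg.2 hr.le)
    calc r ^ m * ((r - 1) * (r - c)) = r ^ (m + 1) * (r - 1) - c * r ^ m * (r - 1) := by ring
      _ ≤ A * ((∑ i ∈ range m, r ^ i) * (r - 1)) := by linarith
      _ = A * (r ^ m - 1) := by rw [geom_sum_mul]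
  exact le_of_mul_le_mul_left (by nlinarith) hrm

theorem sum_Icc_two_pow_sub {R : Type*} [Semiring R] (r : R) (n : ℕ) :
    ∑ j ∈ Icc 2 n, r ^ (n - j) = ∑ i ∈ range (n - 1), r ^ i := by
  rw [← Ico_add_one_right_eq_Icc, sum_Ico_reflect (fun i => r ^ i) 2 le_rfl,
    range_eq_Ico]
  congr 2; omega

theorem norm_pow_le_sum_of_root {𝕜 : Type*} [NormedDivisionRing 𝕜] {n : ℕ} {a : ℕ → 𝕜} {z : 𝕜}
    (hz : z ^ n + ∑ j ∈ Icc 1 n, a j * z ^ (n - j) = 0) :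
    ‖z‖ ^ n ≤ ∑ j ∈ Icc 1 n, ‖a j‖ * ‖z‖ ^ (n - j) := by
  calc ‖z‖ ^ n = ‖∑ j ∈ Icc 1 n, a j * z ^ (n - j)‖ := by
        rw [← norm_pow, eq_neg_of_add_eq_zero_left hz, norm_neg]
    _ ≤ ∑ j ∈ Icc 1 n, ‖a j * z ^ (n - j)‖ := norm_sum_le _ _
    _ = ∑ j ∈ Icc 1 n, ‖a j‖ * ‖z‖ ^ (n - j) := by simp only [norm_mul, norm_pow]

theorem sub_one_mul_sub_le_of_root {𝕜 : Type*} [NormedDivisionRing 𝕜] {n : ℕ} (hn : 1 ≤ n)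
    {a : ℕ → 𝕜} {A : ℝ} (hA : 0 ≤ A) (ha : ∀ j ∈ Icc 2 n, ‖a j‖ ≤ A) {z : 𝕜}
    (hz : z ^ n + ∑ j ∈ Icc 1 n, a j * z ^ (n - j) = 0) (hz1 : 1 < ‖z‖) :
    (‖z‖ - 1) * (‖z‖ - ‖a 1‖) ≤ A := by
  obtain ⟨m, rfl⟩ : ∃ m, n = m + 1 := ⟨n - 1, by omega⟩
  refine sub_one_mul_sub_le_of_pow_le (m := m) hz1 hA ?_
  calc ‖z‖ ^ (m + 1) ≤ ∑ j ∈ Icc 1 (m + 1), ‖a j‖ * ‖z‖ ^ (m + 1 - j) :=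
        norm_pow_le_sum_of_root hz
    _ = ‖a 1‖ * ‖z‖ ^ m + ∑ j ∈ Icc 2 (m + 1), ‖a j‖ * ‖z‖ ^ (m + 1 - j) := by
        rw [← insert_Icc_add_one_left_eq_Icc hn, sum_insert (by simp), Nat.add_sub_cancel]
        rfl
    _ ≤ ‖a 1‖ * ‖z‖ ^ m + ∑ j ∈ Icc 2 (m + 1), A * ‖z‖ ^ (m + 1 - j) := by
        gcongr with j hj
        exact ha j hj
    _ = ‖a 1‖ * ‖z‖ ^ m + A * ∑ i ∈ range m, ‖z‖ ^ i := by
        rw [← mul_sum, sum_Icc_two_pow_sub, Nat.add_sub_cancel]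

theorem joyal_labelle_rahman_bound (n : ℕ) (hn : 2 ≤ n) (a : ℕ → ℂ) (A₂ : ℝ)
    (hA₂ : IsGreatest {x : ℝ | ∃ j ∈ Finset.Icc 2 n, x = ‖a j‖} A₂) :
    ∀ z : ℂ, z ^ n + ∑ j ∈ Finset.Icc 1 n, a j * z ^ (n - j) = 0 →
      ‖z‖ ≤
        (‖a 1‖ + 1 +
          Real.sqrt ((‖a 1‖ - 1) ^ 2 + 4 * A₂)) / 2 := by
  obtain ⟨⟨j₀, -, hA₂_eq⟩, hA₂_ub⟩ := hA₂
  have hA₂_nonneg : 0 ≤ A₂ := hA₂_eq ▸ norm_nonneg _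
  intro z hz
  rcases le_or_gt ‖z‖ 1 with hz1 | hz1
  · refine hz1.trans (le_of_sub_one_mul_sub_le ?_)
    simpa using hA₂_nonneg
  · exact le_of_sub_one_mul_sub_le <| sub_one_mul_sub_le_of_root (by omega) hA₂_nonneg
      (fun j hj => hA₂_ub ⟨j, hj, rfl⟩) hz hz1
end

section
/- Let ρ be the unique positive root of Q(x) = x^n - Σ|a_j| x^{n-j}. Then ρ ≤ (|a_1| + 1 + sqrt((|a_1| - 1)^2 + 4 A_2))/2 where A_2 = max_{2 ≤ j ≤ n} |a_j|. -/
/-!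
If `ρ ≤ 1` there is nothing to prove, since the bound is at least `1`. If `ρ > 1`, split
off the `j = 1` term of `ρⁿ = Σ |aⱼ| ρⁿ⁻ʲ` and bound the rest by `A₂ (ρⁿ⁻¹ - 1)/(ρ - 1)`;
multiplying by `ρ - 1` and dividing by `ρⁿ⁻¹` gives `ρ (ρ - 1) ≤ |a₁| (ρ - 1) + A₂`, so `ρ` lies
below the larger root of `x² - (|a₁| + 1) x + |a₁| - A₂`, which is the stated bound.
-/

open Finset

lemma geom_sum_Icc_two_mul_sub_one {R : Type*} [CommRing R] (x : R) (n : ℕ) :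
    (∑ j ∈ Icc 2 n, x ^ (n - j)) * (x - 1) = x ^ (n - 1) - 1 := by
  rw [← Ico_add_one_right_eq_Icc, sum_Ico_reflect _ _ le_rfl, ← geom_sum_mul]
  congr 2
  rw [range_eq_Ico]
  congr 1
  omega

lemma sum_Icc_one_eq_add_sum_Icc_two {M : Type*} [AddCommMonoid M] {n : ℕ} (hn : 1 ≤ n)
    (f : ℕ → M) : ∑ j ∈ Icc 1 n, f j = f 1 + ∑ j ∈ Icc 2 n, f j := by
  rw [← insert_Icc_succ_left_eq_Icc hn, sum_insert (by simp)]
  rfl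

lemma mul_sub_one_le_of_pow_le_sum {x A : ℝ} {n : ℕ} {c : ℕ → ℝ} (hn : 1 ≤ n) (hx : 1 < x)
    (hA : 0 ≤ A) (hc : ∀ j ∈ Icc 2 n, c j ≤ A)
    (h : x ^ n ≤ ∑ j ∈ Icc 1 n, c j * x ^ (n - j)) :
    x * (x - 1) ≤ c 1 * (x - 1) + A := by
  have hx1 : 0 < x - 1 := sub_pos.mpr hx
  have hpow : 0 < x ^ (n - 1) := pow_pos (by linarith) _
  have htail : (∑ j ∈ Icc 2 n, c j * x ^ (n - j)) * (x - 1) ≤ A * (x ^ (n - 1) - 1) := by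
    rw [← geom_sum_Icc_two_mul_sub_one, ← mul_assoc, mul_sum]
    gcongr with j hj
    exact hc j hj
  have hxn : x ^ n = x ^ (n - 1) * x := by rw [← pow_succ, Nat.sub_add_cancel hn]
  rw [sum_Icc_one_eq_add_sum_Icc_two hn, hxn] at h
  refine le_of_mul_le_mul_left ?_ hpow
  nlinarith [mul_le_mul_of_nonneg_right h hx1.le]

lemma le_upper_root_of_mul_sub_one_le {x L A : ℝ} (h : x * (x - 1) ≤ L * (x - 1) + A) :
    x ≤ (L + 1 + √((L - 1) ^ 2 + 4 * A)) / 2 := by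
  have := Real.abs_le_sqrt (x := 2 * x - (L + 1)) (y := (L - 1) ^ 2 + 4 * A) (by nlinarith)
  linarith [le_abs_self (2 * x - (L + 1))]

lemma one_le_upper_root {L A : ℝ} (hA : 0 ≤ A) :
    1 ≤ (L + 1 + √((L - 1) ^ 2 + 4 * A)) / 2 := by
  have := Real.abs_le_sqrt (x := L - 1) (y := (L - 1) ^ 2 + 4 * A) (by linarith)
  linarith [neg_abs_le (L - 1)]

theorem jlr_bound_on_cauchy_bound_general (n : ℕ) (hn : 2 ≤ n) (a : ℕ → ℂ) (ρ : ℝ)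
    (hρ : ρ ^ n - ∑ j ∈ Finset.Icc 1 n, ‖a j‖ * ρ ^ (n - j) = 0)
    (A₂ : ℝ)
    (hA₂ : IsGreatest {x : ℝ | ∃ j ∈ Finset.Icc 2 n, x = ‖a j‖} A₂) :
    ρ ≤ (‖a 1‖ + 1 +
        Real.sqrt ((‖a 1‖ - 1) ^ 2 + 4 * A₂)) / 2 := by
  have hA₂_nonneg : 0 ≤ A₂ := by
    obtain ⟨j, -, rfl⟩ := hA₂.1
    exact norm_nonneg _
  rcases le_or_gt ρ 1 with hρ1 | hρ1
  · exact hρ1.trans (one_le_upper_root hA₂_nonneg)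
  · refine le_upper_root_of_mul_sub_one_le ?_
    exact mul_sub_one_le_of_pow_le_sum (by omega) hρ1 hA₂_nonneg
      (fun j hj => hA₂.2 ⟨j, hj, rfl⟩) (sub_eq_zero.mp hρ).le

theorem jlr_bound_on_cauchy_bound (n : ℕ) (hn : 2 ≤ n) (a : ℕ → ℂ)
    (hne : ∃ j ∈ Finset.Icc 1 n, a j ≠ 0) (ρ : ℝ) (hρpos : 0 < ρ)
    (hρ : ρ ^ n - ∑ j ∈ Finset.Icc 1 n, ‖a j‖ * ρ ^ (n - j) = 0)
    (A₂ : ℝ)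
    (hA₂ : IsGreatest {x : ℝ | ∃ j ∈ Finset.Icc 2 n, x = ‖a j‖} A₂) :
    ρ ≤ (‖a 1‖ + 1 +
        Real.sqrt ((‖a 1‖ - 1) ^ 2 + 4 * A₂)) / 2 :=
  jlr_bound_on_cauchy_bound_general n hn a ρ hρ A₂ hA₂
end

section
/- Let 1 ≤ ℓ ≤ q where q is the largest index with a_q ≠ 0. Then the polynomial P_ℓ(x) = (x - 1) F_ℓ(x) - A_ℓ, with F_ℓ(x) = x^{ℓ-1} - Σ_{j=1}^{ℓ-1} |a_j| x^{ℓ-1-j} and A_ℓ = max_{j ≥ ℓ} |a_j| > 0, has exactly one real zero in the interval [1, +∞). -/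
/-!
Dividing by `y ^ m` turns `F y = y ^ m - ∑ c j y ^ (m - j)` into `1 - ∑ c j y⁻ʲ`, which is monotone
on `(0, ∞)` because the `c j` are nonnegative. Hence `F` cannot decrease to the right of a point
where it is nonnegative, and `(y - 1) F y` is strictly increasing on the part of `[1, ∞)` where
`F > 0`; every solution of `(y - 1) F y = A > 0` lies there, which gives uniqueness. Existence
follows from the intermediate value theorem, since `(y - 1) F y` vanishes at `1` and is unbounded.
-/

open Finset

/-- The polynomial `F_ℓ` of the paper, with `m = ℓ - 1`. -/
noncomputable def comparisonPoly (c : ℕ → ℝ) (m : ℕ) (y : ℝ) : ℝ :=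
  y ^ m - ∑ j ∈ Icc 1 m, c j * y ^ (m - j)

noncomputable def comparisonRatio (c : ℕ → ℝ) (m : ℕ) (y : ℝ) : ℝ :=
  1 - ∑ j ∈ Icc 1 m, c j * y⁻¹ ^ j

section

variable {c : ℕ → ℝ} {m : ℕ}

theorem continuous_comparisonPoly (c : ℕ → ℝ) (m : ℕ) : Continuous (comparisonPoly c m) := by
  unfold comparisonPoly
  fun_prop

theorem comparisonPoly_eq_pow_mul_comparisonRatio {y : ℝ} (hy : y ≠ 0) :
    comparisonPoly c m y = y ^ m * comparisonRatio c m y := by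
  unfold comparisonPoly comparisonRatio
  rw [mul_sub, mul_one, Finset.mul_sum]
  congr 1
  refine Finset.sum_congr rfl fun j hj => ?_
  rw [pow_sub₀ y hy (Finset.mem_Icc.mp hj).2, inv_pow]
  ring

theorem comparisonRatio_monotoneOn (hc : ∀ j, 0 ≤ c j) :
    MonotoneOn (comparisonRatio c m) (Set.Ioi 0) := by
  intro y hy z _ hyz
  refine sub_le_sub_left (Finset.sum_le_sum fun j _ => ?_) 1
  exact mul_le_mul_of_nonneg_left
    (pow_le_pow_left₀ (inv_nonneg.mpr (le_of_lt (hy.trans_le hyz))) (inv_anti₀ hy hyz) j) (hc j)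

theorem one_sub_sum_mul_inv_le_comparisonRatio (hc : ∀ j, 0 ≤ c j) {y : ℝ} (hy : 1 ≤ y) :
    1 - (∑ j ∈ Icc 1 m, c j) * y⁻¹ ≤ comparisonRatio c m y := by
  rw [Finset.sum_mul]
  refine sub_le_sub_left (Finset.sum_le_sum fun j hj => ?_) 1
  have hj : j ≠ 0 := by have := (Finset.mem_Icc.mp hj).1; omega
  exact mul_le_mul_of_nonneg_left
    (pow_le_of_le_one (inv_nonneg.mpr (by linarith)) (inv_le_one_of_one_le₀ hy) hj) (hc j)

theorem comparisonPoly_le_comparisonPoly (hc : ∀ j, 0 ≤ c j) {y z : ℝ} (hy : 0 < y)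
    (hyz : y ≤ z) (hF : 0 ≤ comparisonPoly c m y) :
    comparisonPoly c m y ≤ comparisonPoly c m z := by
  have hz : 0 < z := hy.trans_le hyz
  rw [comparisonPoly_eq_pow_mul_comparisonRatio hy.ne',
    comparisonPoly_eq_pow_mul_comparisonRatio hz.ne'] at *
  have hratio : 0 ≤ comparisonRatio c m y := nonneg_of_mul_nonneg_right hF (by positivity)
  calc y ^ m * comparisonRatio c m y
      ≤ z ^ m * comparisonRatio c m y :=
        mul_le_mul_of_nonneg_right (pow_le_pow_left₀ hy.le hyz m) hratio
    _ ≤ z ^ m * comparisonRatio c m z :=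
        mul_le_mul_of_nonneg_left (comparisonRatio_monotoneOn hc hy hz hyz) (by positivity)

theorem strictMonoOn_sub_one_mul_comparisonPoly (hc : ∀ j, 0 ≤ c j) :
    StrictMonoOn (fun y => (y - 1) * comparisonPoly c m y)
      {y | 1 ≤ y ∧ 0 < comparisonPoly c m y} := by
  rintro u ⟨hu, hFu⟩ v ⟨_, hFv⟩ huv
  calc (u - 1) * comparisonPoly c m u
      ≤ (u - 1) * comparisonPoly c m v :=
        mul_le_mul_of_nonneg_left
          (comparisonPoly_le_comparisonPoly hc (by linarith) huv.le hFu.le) (by linarith)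
    _ < (v - 1) * comparisonPoly c m v := mul_lt_mul_of_pos_right (by linarith) hFv

theorem exists_le_sub_one_mul_comparisonPoly (hc : ∀ j, 0 ≤ c j) (A : ℝ) :
    ∃ M ≥ 1, A ≤ (M - 1) * comparisonPoly c m M := by
  set C := ∑ j ∈ Icc 1 m, c j
  have hC : 0 ≤ C := Finset.sum_nonneg fun j _ => hc j
  set M := 1 + 2 * (C + |A|)
  have hA : A ≤ |A| := le_abs_self A
  have hM : 1 ≤ M := by linarith [abs_nonneg A]
  have hCM : C / M ≤ 1 / 2 := by
    rw [div_le_iff₀ (by linarith)]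
    linarith [abs_nonneg A]
  have hratio : 1 / 2 ≤ comparisonRatio c m M := by
    have := one_sub_sum_mul_inv_le_comparisonRatio (m := m) hc hM
    rw [← div_eq_mul_inv] at this
    linarith
  have hF : 1 / 2 ≤ comparisonPoly c m M := by
    rw [comparisonPoly_eq_pow_mul_comparisonRatio (by linarith)]
    nlinarith [one_le_pow₀ (n := m) hM]
  refine ⟨M, hM, ?_⟩
  nlinarith

theorem existsUnique_sub_one_mul_comparisonPoly_eq (hc : ∀ j, 0 ≤ c j) {A : ℝ} (hA : 0 < A) :
    ∃! y : ℝ, 1 ≤ y ∧ (y - 1) * comparisonPoly c m y = A := by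
  obtain ⟨M, hM, hAM⟩ := exists_le_sub_one_mul_comparisonPoly (m := m) hc A
  obtain ⟨y, ⟨hy, -⟩, hyA⟩ : A ∈ (fun y => (y - 1) * comparisonPoly c m y) '' Set.Icc 1 M :=
    intermediate_value_Icc hM
      ((continuous_id.sub continuous_const).mul (continuous_comparisonPoly c m)).continuousOn
      ⟨by simpa using hA.le, hAM⟩
  have mem_of_eq : ∀ z, 1 ≤ z → (z - 1) * comparisonPoly c m z = A →
      z ∈ {y | 1 ≤ y ∧ 0 < comparisonPoly c m y} := fun z hz hzA =>
    ⟨hz, pos_of_mul_pos_right (hzA ▸ hA) (by linarith)⟩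
  refine ⟨y, ⟨hy, hyA⟩, fun z ⟨hz, hzA⟩ => ?_⟩
  exact (strictMonoOn_sub_one_mul_comparisonPoly hc).injOn (mem_of_eq z hz hzA)
    (mem_of_eq y hy hyA) (hzA.trans hyA.symm)

end

theorem Pl_unique_zero_on_Ici_general (q : ℕ) (a : ℕ → ℂ) (hq : a q ≠ 0)
    (ℓ : ℕ) (hℓq : ℓ ≤ q) (Aℓ : ℝ)
    (hA : IsGreatest {x : ℝ | ∃ j ≥ ℓ, x = ‖a j‖} Aℓ) :
    ∃! y : ℝ, 1 ≤ y ∧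
      (y - 1) * (y ^ (ℓ - 1) -
          ∑ j ∈ Finset.Icc 1 (ℓ - 1), ‖a j‖ * y ^ (ℓ - 1 - j))
        - Aℓ = 0 := by
  have hApos : 0 < Aℓ := (norm_pos_iff.mpr hq).trans_le (hA.2 ⟨q, hℓq, rfl⟩)
  simp only [sub_eq_zero]
  exact existsUnique_sub_one_mul_comparisonPoly_eq (m := ℓ - 1) (fun j => norm_nonneg (a j)) hApos

theorem Pl_unique_zero_on_Ici (n q : ℕ) (a : ℕ → ℂ) (hq : a q ≠ 0)
    (ha0 : ∀ j > q, a j = 0) (ℓ : ℕ) (hℓ1 : 1 ≤ ℓ) (hℓq : ℓ ≤ q) (Aℓ : ℝ)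
    (hA : IsGreatest {x : ℝ | ∃ j ≥ ℓ, x = ‖a j‖} Aℓ) :
    ∃! y : ℝ, 1 ≤ y ∧
      (y - 1) * (y ^ (ℓ - 1) -
          ∑ j ∈ Finset.Icc 1 (ℓ - 1), ‖a j‖ * y ^ (ℓ - 1 - j))
        - Aℓ = 0 :=
  Pl_unique_zero_on_Ici_general q a hq ℓ hℓq Aℓ hA
end

section
/- For ℓ > q (q the largest index with a_q ≠ 0), the largest real zero r_ℓ of P_ℓ(x) = (x-1) F_ℓ(x) equals max(1, ρ), where ρ is the unique positive root of Q(x) = x^q - Σ_{j=1}^q |a_j| x^{q-j}. -/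
/-!
For `c_j ≥ 0`, Cauchy's polynomial `x^m - ∑ c_j x^(m-j)` equals `x^m (1 - ∑ c_j / x^j)` for
`x ≠ 0`, and the bracket is strictly increasing on `(0, ∞)` once some `c_j` is positive (which a
positive root `ρ` forces). So the polynomial is positive beyond `ρ`, and the real zeros of
`(x - 1)` times it are bounded by `max 1 ρ`, which is itself a zero. Since `a_j = 0` for `j > q`,
`F_ℓ(x) = x^(ℓ-1-q) Q(x)`, so `ρ` is also a root of `F_ℓ`.
-/

open Finset

noncomputable def cauchyPoly (c : ℕ → ℝ) (m : ℕ) (x : ℝ) : ℝ :=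
  x ^ m - ∑ j ∈ Icc 1 m, c j * x ^ (m - j)

section CauchyPoly

variable {c : ℕ → ℝ} {m : ℕ}

theorem cauchyPoly_eq_pow_mul_of_forall_gt_eq_zero {q : ℕ} (hc : ∀ j > q, c j = 0)
    (hqm : q ≤ m) (x : ℝ) : cauchyPoly c m x = x ^ (m - q) * cauchyPoly c q x := by
  have hsum : ∑ j ∈ Icc 1 m, c j * x ^ (m - j) = ∑ j ∈ Icc 1 q, c j * x ^ (m - j) :=
    (sum_subset (Icc_subset_Icc_right hqm) fun j hjm hjq => by
      simp only [mem_Icc, not_and, not_le] at hjm hjq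
      simp [hc j (hjq hjm.1)]).symm
  rw [cauchyPoly, cauchyPoly, hsum, mul_sub, mul_sum, ← pow_add, Nat.sub_add_cancel hqm]
  congr 1
  refine sum_congr rfl fun j hj => ?_
  rw [mem_Icc] at hj
  rw [mul_left_comm, ← pow_add]
  congr 2
  omega

theorem cauchyPoly_eq_pow_mul_one_sub_sum_div {x : ℝ} (hx : x ≠ 0) :
    cauchyPoly c m x = x ^ m * (1 - ∑ j ∈ Icc 1 m, c j / x ^ j) := by
  rw [cauchyPoly, mul_sub, mul_one, mul_sum]
  congr 1
  refine sum_congr rfl fun j hj => ?_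
  rw [pow_sub₀ x hx (mem_Icc.1 hj).2]
  field_simp

theorem strictAntiOn_sum_div_pow (hc : ∀ j, 0 ≤ c j) (hpos : ∃ j ∈ Icc 1 m, 0 < c j) :
    StrictAntiOn (fun x : ℝ => ∑ j ∈ Icc 1 m, c j / x ^ j) (Set.Ioi 0) := by
  intro y (hy : 0 < y) x _ hyx
  obtain ⟨k, hk, hck⟩ := hpos
  refine sum_lt_sum (fun j _ => ?_) ⟨k, hk, ?_⟩
  · exact div_le_div_of_nonneg_left (hc j) (pow_pos hy j) (pow_le_pow_left₀ hy.le hyx.le j)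
  · exact div_lt_div_of_pos_left hck (pow_pos hy k)
      (pow_lt_pow_left₀ hyx hy.le (by rw [mem_Icc] at hk; omega))

theorem cauchyPoly_pos_of_lt (hc : ∀ j, 0 ≤ c j) {ρ x : ℝ} (hρ : 0 < ρ)
    (hroot : cauchyPoly c m ρ = 0) (hρx : ρ < x) : 0 < cauchyPoly c m x := by
  have hx : 0 < x := hρ.trans hρx
  have hsumρ : ∑ j ∈ Icc 1 m, c j / ρ ^ j = 1 := by
    rw [cauchyPoly_eq_pow_mul_one_sub_sum_div hρ.ne'] at hroot
    linarith [(mul_eq_zero.1 hroot).resolve_left (pow_ne_zero m hρ.ne')]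
  have hpos : ∃ j ∈ Icc 1 m, 0 < c j := by
    obtain ⟨j, hj, hlt⟩ := exists_lt_of_sum_lt (f := fun _ => (0 : ℝ))
      (g := fun j => c j / ρ ^ j) (by rw [sum_const_zero, hsumρ]; exact one_pos)
    exact ⟨j, hj, (div_pos_iff_of_pos_right (pow_pos hρ j)).1 hlt⟩
  have hlt := strictAntiOn_sum_div_pow hc hpos (Set.mem_Ioi.2 hρ) (Set.mem_Ioi.2 hx) hρx
  rw [cauchyPoly_eq_pow_mul_one_sub_sum_div hx.ne']
  exact mul_pos (pow_pos hx m) (by simp only at hlt; linarith)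

theorem isGreatest_sub_one_mul_cauchyPoly_eq_zero (hc : ∀ j, 0 ≤ c j) {ρ : ℝ} (hρ : 0 < ρ)
    (hroot : cauchyPoly c m ρ = 0) :
    IsGreatest {x : ℝ | (x - 1) * cauchyPoly c m x = 0} (max 1 ρ) := by
  refine ⟨?_, fun x hx => ?_⟩
  · rcases max_choice 1 ρ with h | h <;> simp [h, hroot]
  · by_contra! hlt
    have h1x : 1 < x := (le_max_left 1 ρ).trans_lt hlt
    have hQ := cauchyPoly_pos_of_lt hc hρ hroot ((le_max_right 1 ρ).trans_lt hlt)
    exact (mul_pos (sub_pos.2 h1x) hQ).ne' hx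

end CauchyPoly

theorem rl_eq_max_one_rho_general (q : ℕ) (a : ℕ → ℂ)
    (ha0 : ∀ j > q, a j = 0) (ℓ : ℕ) (hℓ : q < ℓ)
    (ρ : ℝ) (hρpos : 0 < ρ)
    (hρ : ρ ^ q - ∑ j ∈ Finset.Icc 1 q, ‖a j‖ * ρ ^ (q - j) = 0)
    (rℓ : ℝ)
    (hrℓ : IsGreatest {x : ℝ |
      (x - 1) * (x ^ (ℓ - 1) -
        ∑ j ∈ Finset.Icc 1 (ℓ - 1), ‖a j‖ * x ^ (ℓ - 1 - j)) = 0} rℓ) :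
    rℓ = max 1 ρ := by
  have hroot : cauchyPoly (‖a ·‖) (ℓ - 1) ρ = 0 := by
    rw [cauchyPoly_eq_pow_mul_of_forall_gt_eq_zero (fun j hj => by simp [ha0 j hj])
      (by omega : q ≤ ℓ - 1)]
    exact mul_eq_zero_of_right _ hρ
  exact hrℓ.unique
    (isGreatest_sub_one_mul_cauchyPoly_eq_zero (fun j => norm_nonneg (a j)) hρpos hroot)

theorem rl_eq_max_one_rho (n q : ℕ) (a : ℕ → ℂ) (hq : a q ≠ 0)
    (ha0 : ∀ j > q, a j = 0) (ℓ : ℕ) (hℓ : q < ℓ)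
    (ρ : ℝ) (hρpos : 0 < ρ)
    (hρ : ρ ^ q - ∑ j ∈ Finset.Icc 1 q, ‖a j‖ * ρ ^ (q - j) = 0)
    (rℓ : ℝ)
    (hrℓ : IsGreatest {x : ℝ |
      (x - 1) * (x ^ (ℓ - 1) -
        ∑ j ∈ Finset.Icc 1 (ℓ - 1), ‖a j‖ * x ^ (ℓ - 1 - j)) = 0} rℓ) :
    rℓ = max 1 ρ :=
  rl_eq_max_one_rho_general q a ha0 ℓ hℓ ρ hρpos hρ rℓ hrℓ
end

section
/- Let r_ℓ be the largest real zero in [1,∞) of P_ℓ(x) = (x-1)F_ℓ(x) - A_ℓ, where F_ℓ(x) = x^{ℓ-1} - Σ_{j=1}^{ℓ-1}|a_j| x^{ℓ-1-j} and A_ℓ = max_{j ≥ ℓ}|a_j|. Then for 1 ≤ ℓ < q (q the largest index with a_q ≠ 0), r_{ℓ+1} ≤ r_ℓ. -/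
/-!
With `F_ℓ(x) = x^(ℓ-1) - ∑_{j=1}^{ℓ-1} |a_j| x^(ℓ-1-j)` one has `F_{ℓ+1}(x) = x F_ℓ(x) - |a_ℓ|`, so at the
root `r_ℓ`, where `(r_ℓ - 1) F_ℓ(r_ℓ) = A_ℓ`,
`P_{ℓ+1}(r_ℓ) = r_ℓ A_ℓ - (r_ℓ - 1)|a_ℓ| - A_{ℓ+1} ≥ r_ℓ A_ℓ - (r_ℓ - 1) A_ℓ - A_ℓ = 0`.
Since `P_{ℓ+1}(1) = -A_{ℓ+1} ≤ 0`, the intermediate value theorem puts a root of `P_{ℓ+1}` in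
`[1, r_ℓ]`, and by uniqueness that root is `r_{ℓ+1}`.
-/

open Finset

/-- `x^m - ∑_{j=1}^m c_j x^(m-j)`, the polynomial `F_{m+1}` of the paper when `c_j = |a_j|`. -/
noncomputable def descPoly (c : ℕ → ℝ) (m : ℕ) (x : ℝ) : ℝ :=
  x ^ m - ∑ j ∈ Icc 1 m, c j * x ^ (m - j)

lemma descPoly_succ (c : ℕ → ℝ) (m : ℕ) (x : ℝ) :
    descPoly c (m + 1) x = x * descPoly c m x - c (m + 1) := by
  have hsum : ∑ j ∈ Icc 1 m, c j * x ^ (m + 1 - j) = x * ∑ j ∈ Icc 1 m, c j * x ^ (m - j) := by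
    rw [mul_sum]
    refine sum_congr rfl fun j hj => ?_
    rw [show m + 1 - j = m - j + 1 by have := (mem_Icc.mp hj).2; omega, pow_succ]
    ring
  rw [descPoly, descPoly, sum_Icc_succ_top (by omega), hsum, Nat.sub_self, pow_zero, pow_succ]
  ring

@[fun_prop]
lemma continuous_descPoly (c : ℕ → ℝ) (m : ℕ) : Continuous (descPoly c m) := by
  unfold descPoly
  fun_prop

lemma le_of_unique_root_of_nonpos_of_nonneg {f : ℝ → ℝ} (hf : Continuous f) {b r s : ℝ}
    (hbr : b ≤ r) (hfb : f b ≤ 0) (hfr : 0 ≤ f r) (hs : ∀ y, b ≤ y → f y = 0 → y = s) :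
    s ≤ r := by
  obtain ⟨y, ⟨hby, hyr⟩, hy⟩ := intermediate_value_Icc hbr hf.continuousOn ⟨hfb, hfr⟩
  exact hs y hby hy ▸ hyr

theorem r_succ_le_r_general (a : ℕ → ℂ) (ℓ : ℕ) (hℓ1 : 1 ≤ ℓ)
    (Aℓ Aℓ₁ : ℝ)
    (hA : IsGreatest {x : ℝ | ∃ j ≥ ℓ, x = ‖a j‖} Aℓ)
    (hA₁ : IsGreatest {x : ℝ | ∃ j ≥ ℓ + 1, x = ‖a j‖} Aℓ₁)
    (rℓ rℓ₁ : ℝ)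
    (hrℓ : (1 ≤ rℓ ∧
      (rℓ - 1) * (rℓ ^ (ℓ - 1) -
        ∑ j ∈ Finset.Icc 1 (ℓ - 1), ‖a j‖ * rℓ ^ (ℓ - 1 - j))
        - Aℓ = 0) ∧
      ∀ y : ℝ, 1 ≤ y →
        (y - 1) * (y ^ (ℓ - 1) -
          ∑ j ∈ Finset.Icc 1 (ℓ - 1), ‖a j‖ * y ^ (ℓ - 1 - j))
          - Aℓ = 0 → y = rℓ)
    (hrℓ₁ : (1 ≤ rℓ₁ ∧
      (rℓ₁ - 1) * (rℓ₁ ^ (ℓ + 1 - 1) -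
        ∑ j ∈ Finset.Icc 1 (ℓ + 1 - 1), ‖a j‖ * rℓ₁ ^ (ℓ + 1 - 1 - j))
        - Aℓ₁ = 0) ∧
      ∀ y : ℝ, 1 ≤ y →
        (y - 1) * (y ^ (ℓ + 1 - 1) -
          ∑ j ∈ Finset.Icc 1 (ℓ + 1 - 1), ‖a j‖ * y ^ (ℓ + 1 - 1 - j))
          - Aℓ₁ = 0 → y = rℓ₁) :
    rℓ₁ ≤ rℓ := by
  obtain ⟨⟨hr1, hroot⟩, -⟩ := hrℓ
  obtain ⟨-, hunique⟩ := hrℓ₁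
  set c : ℕ → ℝ := fun j => ‖a j‖
  have hAℓ₁_nonneg : 0 ≤ Aℓ₁ := by
    obtain ⟨j, -, rfl⟩ := hA₁.1
    exact norm_nonneg _
  have hAℓ₁_le : Aℓ₁ ≤ Aℓ := by
    obtain ⟨j, hj, hAj⟩ := hA₁.1
    exact hAj ▸ hA.2 ⟨j, by omega, rfl⟩
  have hcℓ_le : c ℓ ≤ Aℓ := hA.2 ⟨ℓ, le_rfl, rfl⟩
  have hF : descPoly c ℓ rℓ = rℓ * descPoly c (ℓ - 1) rℓ - c ℓ := by
    simpa only [Nat.sub_add_cancel hℓ1] using descPoly_succ c (ℓ - 1) rℓ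
  replace hroot : (rℓ - 1) * descPoly c (ℓ - 1) rℓ = Aℓ := by
    rw [descPoly]; linarith
  refine le_of_unique_root_of_nonpos_of_nonneg (f := fun y => (y - 1) * descPoly c ℓ y - Aℓ₁)
    (by fun_prop) hr1 (by simpa using hAℓ₁_nonneg) ?_ hunique
  show 0 ≤ (rℓ - 1) * descPoly c ℓ rℓ - Aℓ₁
  calc 0 = rℓ * Aℓ - (rℓ - 1) * Aℓ - Aℓ := by ring
    _ ≤ rℓ * Aℓ - (rℓ - 1) * c ℓ - Aℓ₁ := by
        linarith [mul_le_mul_of_nonneg_left hcℓ_le (sub_nonneg.mpr hr1)]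
    _ = (rℓ - 1) * descPoly c ℓ rℓ - Aℓ₁ := by rw [hF, ← hroot]; ring

theorem r_succ_le_r (n q : ℕ) (a : ℕ → ℂ) (hq : a q ≠ 0)
    (ha0 : ∀ j > q, a j = 0) (ℓ : ℕ) (hℓ1 : 1 ≤ ℓ) (hℓq : ℓ < q)
    (Aℓ Aℓ₁ : ℝ)
    (hA : IsGreatest {x : ℝ | ∃ j ≥ ℓ, x = ‖a j‖} Aℓ)
    (hA₁ : IsGreatest {x : ℝ | ∃ j ≥ ℓ + 1, x = ‖a j‖} Aℓ₁)
    (rℓ rℓ₁ : ℝ)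
    (hrℓ : (1 ≤ rℓ ∧
      (rℓ - 1) * (rℓ ^ (ℓ - 1) -
        ∑ j ∈ Finset.Icc 1 (ℓ - 1), ‖a j‖ * rℓ ^ (ℓ - 1 - j))
        - Aℓ = 0) ∧
      ∀ y : ℝ, 1 ≤ y →
        (y - 1) * (y ^ (ℓ - 1) -
          ∑ j ∈ Finset.Icc 1 (ℓ - 1), ‖a j‖ * y ^ (ℓ - 1 - j))
          - Aℓ = 0 → y = rℓ)
    (hrℓ₁ : (1 ≤ rℓ₁ ∧
      (rℓ₁ - 1) * (rℓ₁ ^ (ℓ + 1 - 1) -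
        ∑ j ∈ Finset.Icc 1 (ℓ + 1 - 1), ‖a j‖ * rℓ₁ ^ (ℓ + 1 - 1 - j))
        - Aℓ₁ = 0) ∧
      ∀ y : ℝ, 1 ≤ y →
        (y - 1) * (y ^ (ℓ + 1 - 1) -
          ∑ j ∈ Finset.Icc 1 (ℓ + 1 - 1), ‖a j‖ * y ^ (ℓ + 1 - 1 - j))
          - Aℓ₁ = 0 → y = rℓ₁) :
    rℓ₁ ≤ rℓ :=
  r_succ_le_r_general a ℓ hℓ1 Aℓ Aℓ₁ hA hA₁ rℓ rℓ₁ hrℓ hrℓ₁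
end
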